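/- Let u : ℝ → ℤ → ℝ be differentiable in t and satisfy u̇ₙ = (uₙ₊₁ + uₙ)(uₙ + uₙ₋₁)(uₙ₊₂ + uₙ₊₁ − uₙ₋₁ − uₙ₋₂). Define v s n = (−1)ⁿ · u (−s) n. Then v satisfies v̇ₙ = (vₙ₊₁ − vₙ)(vₙ − vₙ₋₁)(vₙ₊₂ − vₙ₊₁ + vₙ₋₁ − vₙ₋₂), where v̇ₙ is the derivative with respect to s. -/

import Mathlib

/-!
Write `σ = (-1)ⁿ`. Since `(-1)ⁿ⁺ᵏ = (-1)ᵏ σ`, the staggered sign turns every difference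
`vₙ₊₁ - vₙ`, `vₙ - vₙ₋₁`, `vₙ₊₂ - vₙ₊₁ + vₙ₋₁ - vₙ₋₂` into `±σ` times the corresponding sum of `u`,
so the right-hand side for `v` is `-σ³ = -σ` times the right-hand side for `u` at time `-s`.
The time reversal `s ↦ -s` contributes exactly this sign `-1` to `v̇ₙ = -σ u̇ₙ(-s)`.
-/

section NegOneZPow

variable {α : Type*} [DivisionRing α]

lemma neg_one_zpow_add_one (n : ℤ) : (-1 : α) ^ (n + 1) = -(-1) ^ n := by
  rw [zpow_add_one₀ (by norm_num), mul_neg_one]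

lemma neg_one_zpow_sub_one (n : ℤ) : (-1 : α) ^ (n - 1) = -(-1) ^ n := by
  rw [zpow_sub_one₀ (by norm_num), inv_neg, inv_one, mul_neg_one]

lemma neg_one_zpow_add_two (n : ℤ) : (-1 : α) ^ (n + 2) = (-1) ^ n := by
  rw [zpow_add₀ (by norm_num)]; norm_num

lemma neg_one_zpow_sub_two (n : ℤ) : (-1 : α) ^ (n - 2) = (-1) ^ n := by
  rw [zpow_sub₀ (by norm_num)]; norm_num

lemma neg_one_zpow_mul_self (n : ℤ) : (-1 : α) ^ n * (-1) ^ n = 1 := by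
  rw [← zpow_add₀ (by norm_num), ← two_mul, zpow_mul]; norm_num

end NegOneZPow

lemma HasDerivAt.comp_neg {𝕜 F : Type*} [NontriviallyNormedField 𝕜] [NormedAddCommGroup F]
    [NormedSpace 𝕜 F] {f : 𝕜 → F} {f' : F} {x : 𝕜} (hf : HasDerivAt f f' (-x)) :
    HasDerivAt (fun x ↦ f (-x)) (-f') x := by
  simpa using HasDerivAt.comp_const_sub 0 x (by simpa using hf)

/-- Transformation T7 relates equation (E12) to equation (E10) with a = b = 0. -/
theorem stmt_12 (u v : ℝ → ℤ → ℝ)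
    (hu : ∀ t n, HasDerivAt (fun s => u s n)
      ((u t (n + 1) + u t n) * (u t n + u t (n - 1)) *
        (u t (n + 2) + u t (n + 1) - u t (n - 1) - u t (n - 2))) t)
    (hv : ∀ s n, v s n = (-1 : ℝ) ^ n * u (-s) n) :
    ∀ s n, HasDerivAt (fun r => v r n)
      ((v s (n + 1) - v s n) * (v s n - v s (n - 1)) *
        (v s (n + 2) - v s (n + 1) + v s (n - 1) - v s (n - 2))) s := by
  intro s n
  have hderiv := ((hu (-s) n).comp_neg).const_mul ((-1 : ℝ) ^ n)
  simp only [← hv] at hderiv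
  refine hderiv.congr_deriv ?_
  simp only [hv, neg_one_zpow_add_one, neg_one_zpow_sub_one, neg_one_zpow_add_two,
    neg_one_zpow_sub_two]
  set σ : ℝ := (-1) ^ n
  linear_combination σ * ((u (-s) (n + 1) + u (-s) n) * (u (-s) n + u (-s) (n - 1)) *
    (u (-s) (n + 2) + u (-s) (n + 1) - u (-s) (n - 1) - u (-s) (n - 2))) *
      neg_one_zpow_mul_self (α := ℝ) n
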